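/- Let G be a finite simple graph whose edge set carries a linear order, let e be the minimum edge of G, and let k be a natural number. Then the number of k-element subsets of the edge set of G − e that include no broken circuit of G − e equals the number of k-element subsets of the edge set of G that do not contain e and include no broken circuit of G. -/

import Mathlib

attribute [-instance] Sym2.instPartialOrder

open SimpleGraph

/-- `B` is a broken circuit of the simple graph `G` (whose edges are compared via the
linear order on `Sym2 V`): `B` is obtained from the edge set of a cycle of `G` by
removing its maximum edge. -/
def IsBrokenCircuit {V : Type*} [LinearOrder (Sym2 V)] (G : SimpleGraph V)
    (B : Set (Sym2 V)) : Prop :=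
  ∃ (u : V) (w : G.Walk u u), w.IsCycle ∧
    ∃ fm ∈ w.edges, (∀ g ∈ w.edges, g ≤ fm) ∧ B = {g | g ∈ w.edges} \ {fm}

/-- If `e` is the minimum edge of a finite simple graph `G`, then there are as many
`k`-subsets of `E(G - e)` including no broken circuit of `G - e` as there are
`k`-subsets of `E(G)` not containing `e` and including no broken circuit of `G`. -/
theorem deletion_count_broken_circuit {V : Type*} [Fintype V] [DecidableEq V]
    [LinearOrder (Sym2 V)] (G : SimpleGraph V) (e : Sym2 V) (he : e ∈ G.edgeSet)
    (hmin : ∀ f ∈ G.edgeSet, e ≤ f) (k : ℕ) :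
    {X : Finset (Sym2 V) | ↑X ⊆ (G.deleteEdges {e}).edgeSet ∧ X.card = k ∧
        ¬ ∃ B, IsBrokenCircuit (G.deleteEdges {e}) B ∧ B ⊆ ↑X}.ncard =
      {X : Finset (Sym2 V) | ↑X ⊆ G.edgeSet ∧ X.card = k ∧ e ∉ X ∧
        ¬ ∃ B, IsBrokenCircuit G B ∧ B ⊆ ↑X}.ncard := by
  congr 1
  ext X
  simp only [Set.mem_setOf_eq, edgeSet_deleteEdges]
  constructor
  · rintro ⟨hsub, hcard, hbc⟩
    have heX : e ∉ X := fun h => (hsub h).2 rfl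
    refine ⟨fun f hf => (hsub hf).1, hcard, heX, ?_⟩
    rintro ⟨B, ⟨u, w, hc, fm, hfm, hmax, hB⟩, hBX⟩
    -- e is not an edge of the cycle w
    have heW : e ∉ w.edges := by
      intro hew
      by_cases hefm : e = fm
      · -- all edges of w would equal e, contradicting nodup & length ≥ 3
        have hall : ∀ g ∈ w.edges, g = e := fun g hg =>
          le_antisymm (hefm ▸ hmax g hg) (hmin g (w.edges_subset_edgeSet hg))
        have hnd := hc.edges_nodup
        have hlen : 2 ≤ w.edges.length := by
          rw [w.length_edges]; have := hc.three_le_length; omega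
        have h01 : w.edges.get ⟨0, by omega⟩ = w.edges.get ⟨1, by omega⟩ := by
          rw [hall _ (w.edges.get_mem _), hall _ (w.edges.get_mem _)]
        have := List.nodup_iff_injective_get.mp hnd h01
        simp [Fin.ext_iff] at this
      · have : e ∈ B := by rw [hB]; exact ⟨hew, hefm⟩
        exact heX (hBX this)
    -- transfer the cycle to G - e
    have hsub' : ∀ f ∈ w.edges, f ∈ (G.deleteEdges {e}).edgeSet := by
      intro f hf
      rw [edgeSet_deleteEdges]
      exact ⟨w.edges_subset_edgeSet hf, fun h => heW (h ▸ hf)⟩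
    refine hbc ⟨B, ⟨u, w.transfer _ hsub', hc.transfer hsub', fm, ?_, ?_, ?_⟩, hBX⟩
    · rw [w.edges_transfer]; exact hfm
    · rw [w.edges_transfer]; exact hmax
    · rw [w.edges_transfer]; exact hB
  · rintro ⟨hsub, hcard, heX, hbc⟩
    refine ⟨fun f hf => ⟨hsub hf, fun h => heX (by rw [Set.mem_singleton_iff] at h; exact h ▸ hf)⟩, hcard, ?_⟩
    rintro ⟨B, ⟨u, w, hc, fm, hfm, hmax, hB⟩, hBX⟩
    have hsub' : ∀ f ∈ w.edges, f ∈ G.edgeSet := fun f hf =>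
      ((G.edgeSet_deleteEdges {e}) ▸ w.edges_subset_edgeSet hf).1
    refine hbc ⟨B, ⟨u, w.transfer G hsub', hc.transfer hsub', fm, ?_, ?_, ?_⟩, hBX⟩
    · rw [w.edges_transfer]; exact hfm
    · rw [w.edges_transfer]; exact hmax
    · rw [w.edges_transfer]; exact hB
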